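/- arXiv:1302.4498 — 10 statements merged into one kernel-verified Lean document; each statement's English description precedes it below -/
import Mathlib

section
/- Let p ≥ 5 be a prime and F = F_{p^r}. If A : F → F is an Alltop function, Π : F → F is a planar Dembowski–Ostrom polynomial, L : F → F is an additive function and c ∈ F, then the function A'(x) = A(x) + Π(x) + L(x) + c is also an Alltop function on F. -/
open Finset

/-- The difference function `Δ_{f,a}(x) = f(x+a) - f(x)`. -/
def deltaFn {F : Type*} [Field F] (f : F → F) (a : F) : F → F := fun x => f (x + a) - f x

/-- `f` is planar if `Δ_{f,a}` is a bijection for every `a ≠ 0`. -/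
def IsPlanar {F : Type*} [Field F] (f : F → F) : Prop :=
  ∀ a : F, a ≠ 0 → Function.Bijective (deltaFn f a)

/-- `f` is an Alltop function if `Δ_{f,a}` is planar for every `a ≠ 0`. -/
def IsAlltop {F : Type*} [Field F] (f : F → F) : Prop :=
  ∀ a : F, a ≠ 0 → IsPlanar (deltaFn f a)

/-- `L` is additive if `L(x+y) = L(x) + L(y)`. -/
def IsAdditive {F : Type*} [Field F] (L : F → F) : Prop :=
  ∀ x y : F, L (x + y) = L x + L y

/-- A Dembowski–Ostrom polynomial function on `F_{p^r}`:
`f(x) = ∑_{i,j=0}^{r-1} a_{ij} x^{p^i + p^j}`. -/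
def IsDembowskiOstrom (p r : ℕ) [Fact p.Prime] (f : GaloisField p r → GaloisField p r) : Prop :=
  ∃ a : ℕ → ℕ → GaloisField p r,
    ∀ x, f x = ∑ i ∈ Finset.range r, ∑ j ∈ Finset.range r, a i j * x ^ (p ^ i + p ^ j)

/-!
Adding to `A` a function `Q` whose second differences `Δ_b Δ_a Q` are constant shifts every
`Δ_b Δ_a A` by a constant, which preserves bijectivity; so `A + Q` is again Alltop. Constants,
additive maps and Dembowski–Ostrom polynomials all have constant second differences: for the
monomial `x ^ (p^i + p^j)` this is the Frobenius identity `(x + y) ^ p^i = x ^ p^i + y ^ p^i`.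
-/

section SecondDifferences

variable {F : Type*} [Field F]

def HasConstSecondDiff (Q : F → F) : Prop :=
  ∀ a b : F, ∃ d : F, ∀ x, deltaFn (deltaFn Q a) b x = d

theorem hasConstSecondDiff_const (c : F) : HasConstSecondDiff fun _ : F => c :=
  fun _ _ => ⟨0, fun _ => by simp [deltaFn]⟩

theorem IsAdditive.hasConstSecondDiff {L : F → F} (hL : IsAdditive L) : HasConstSecondDiff L :=
  fun a _ => ⟨0, fun x => by simp [deltaFn, hL _ a]⟩

theorem HasConstSecondDiff.add {Q R : F → F} (hQ : HasConstSecondDiff Q)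
    (hR : HasConstSecondDiff R) : HasConstSecondDiff fun x => Q x + R x := by
  intro a b
  obtain ⟨d, hd⟩ := hQ a b
  obtain ⟨e, he⟩ := hR a b
  refine ⟨d + e, fun x => ?_⟩
  simp only [deltaFn] at hd he ⊢
  linear_combination hd x + he x

theorem HasConstSecondDiff.const_mul {Q : F → F} (hQ : HasConstSecondDiff Q) (c : F) :
    HasConstSecondDiff fun x => c * Q x := by
  intro a b
  obtain ⟨d, hd⟩ := hQ a b
  refine ⟨c * d, fun x => ?_⟩
  simp only [deltaFn] at hd ⊢
  linear_combination c * hd x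

theorem hasConstSecondDiff_sum {ι : Type*} (s : Finset ι) (Q : ι → F → F)
    (hQ : ∀ i ∈ s, HasConstSecondDiff (Q i)) : HasConstSecondDiff fun x => ∑ i ∈ s, Q i x := by
  induction s using Finset.cons_induction with
  | empty => simpa using hasConstSecondDiff_const 0
  | cons i s hi ih =>
    simp only [Finset.sum_cons]
    rw [Finset.forall_mem_cons] at hQ
    exact hQ.1.add (ih hQ.2)

theorem hasConstSecondDiff_pow_add_pow (p : ℕ) [ExpChar F p] (i j : ℕ) :
    HasConstSecondDiff fun x : F => x ^ (p ^ i + p ^ j) := by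
  intro a b
  refine ⟨a ^ p ^ i * b ^ p ^ j + b ^ p ^ i * a ^ p ^ j, fun x => ?_⟩
  simp only [deltaFn, pow_add, add_pow_expChar_pow]
  ring

theorem IsAlltop.add {A Q : F → F} (hA : IsAlltop A) (hQ : HasConstSecondDiff Q) :
    IsAlltop fun x => A x + Q x := by
  intro a ha b hb
  obtain ⟨d, hd⟩ := hQ a b
  have hshift : deltaFn (deltaFn (fun x => A x + Q x) a) b
      = fun x => deltaFn (deltaFn A a) b x + d := by
    funext x
    rw [← hd x]
    simp only [deltaFn]
    ring
  rw [hshift]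
  exact (Equiv.addRight d).bijective.comp (hA a ha b hb)

end SecondDifferences

theorem IsDembowskiOstrom.hasConstSecondDiff {p r : ℕ} [Fact p.Prime]
    {P : GaloisField p r → GaloisField p r} (hP : IsDembowskiOstrom p r P) :
    HasConstSecondDiff P := by
  obtain ⟨a, ha⟩ := hP
  rw [show P = _ from funext ha]
  exact hasConstSecondDiff_sum _ _ fun i _ => hasConstSecondDiff_sum _ _ fun j _ =>
    (hasConstSecondDiff_pow_add_pow p i j).const_mul (a i j)

theorem alltop_add_planarDO_add_additive_add_const_general (p r : ℕ) [Fact p.Prime]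
    (A P L : GaloisField p r → GaloisField p r) (c : GaloisField p r)
    (hA : IsAlltop A) (hPDO : IsDembowskiOstrom p r P) (hL : IsAdditive L) :
    IsAlltop (fun x => A x + P x + L x + c) :=
  ((hA.add hPDO.hasConstSecondDiff).add hL.hasConstSecondDiff).add (hasConstSecondDiff_const c)

theorem alltop_add_planarDO_add_additive_add_const (p r : ℕ) [Fact p.Prime] (hp : 5 ≤ p)
    (hr : 0 < r) (A P L : GaloisField p r → GaloisField p r) (c : GaloisField p r)
    (hA : IsAlltop A) (hP : IsPlanar P) (hPDO : IsDembowskiOstrom p r P) (hL : IsAdditive L) :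
    IsAlltop (fun x => A x + P x + L x + c) :=
  alltop_add_planarDO_add_additive_add_const_general p r A P L c hA hPDO hL
end

section
/- Let p ≥ 5 be a prime, F = F_{p^r}, A : F → F any function and L : F → F an additive polynomial function. Then the composition A ∘ L is an Alltop function on F if and only if A is an Alltop function and L is a bijection of F. -/
open Finset

/-- `l` is affine if `l = L + c` for an additive `L` and a constant `c`. -/
def IsAffine {F : Type*} [Field F] (l : F → F) : Prop :=
  ∃ L : F → F, ∃ c : F, IsAdditive L ∧ ∀ x, l x = L x + c

/-- Extended affine (EA) equivalence: `f(x) = l1(g(l2(x))) + l3(x)` with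
`l1, l2, l3` affine and `l1, l2` bijections. -/
def EAEquiv {F : Type*} [Field F] (f g : F → F) : Prop :=
  ∃ l1 l2 l3 : F → F, IsAffine l1 ∧ IsAffine l2 ∧ IsAffine l3 ∧
    Function.Bijective l1 ∧ Function.Bijective l2 ∧ ∀ x, f x = l1 (g (l2 x)) + l3 x

/-! For additive `L` one has `Δ_{A∘L,a} = Δ_{A,L a} ∘ L`, so the second differences of `A ∘ L`
are those of `A` precomposed with `L`. A nonzero `a` with `L a = 0` would make `Δ_{A∘L,a}`
constant, and a constant function is never planar; hence `L` is injective, so bijective on the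
finite field, and precomposing with a bijection preserves bijectivity of the second differences. -/

open Function

section

variable {F : Type*} [Field F]

theorem deltaFn_comp_additive {G : Type*} [FunLike G F F] [AddHomClass G F F]
    (f : F → F) (L : G) (a : F) : deltaFn (f ∘ L) a = deltaFn f (L a) ∘ L := by
  funext x
  simp only [deltaFn, comp_apply, map_add]

theorem not_isPlanar_const (c : F) : ¬IsPlanar fun _ : F => c := fun h => by
  obtain ⟨x, hx⟩ := (h 1 one_ne_zero).2 1
  simp [deltaFn] at hx

theorem IsAlltop.injective_of_comp {A : F → F} (L : F →+ F) (h : IsAlltop (A ∘ L)) :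
    Injective L := by
  refine (injective_iff_map_eq_zero L).mpr fun a hLa => ?_
  by_contra ha
  have hconst : deltaFn (A ∘ L) a = fun _ => 0 := by
    funext x
    simp only [deltaFn, comp_apply, map_add, hLa, add_zero, sub_self]
  exact not_isPlanar_const _ (hconst ▸ h a ha)

theorem isAlltop_comp_addEquiv_iff (A : F → F) (e : F ≃+ F) :
    IsAlltop (A ∘ e) ↔ IsAlltop A := by
  have hdelta : ∀ a b, deltaFn (deltaFn (A ∘ e) a) b = deltaFn (deltaFn A (e a)) (e b) ∘ e :=
    fun a b => by rw [deltaFn_comp_additive, deltaFn_comp_additive]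
  have hne : ∀ a, a ≠ 0 ↔ e a ≠ 0 := fun a => (map_ne_zero_iff e e.injective).symm
  simp only [IsAlltop, IsPlanar, hdelta]
  exact e.toEquiv.forall_congr fun a => imp_congr (hne a) <|
    e.toEquiv.forall_congr fun b => imp_congr (hne b) (Bijective.of_comp_iff _ e.bijective)

theorem isAlltop_comp_addMonoidHom_iff [Finite F] (A : F → F) (L : F →+ F) :
    IsAlltop (A ∘ L) ↔ IsAlltop A ∧ Bijective L := by
  constructor
  · intro h
    have hbij : Bijective L := Finite.injective_iff_bijective.mp (h.injective_of_comp L)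
    exact ⟨(isAlltop_comp_addEquiv_iff A (AddEquiv.ofBijective L hbij)).mp h, hbij⟩
  · rintro ⟨hA, hbij⟩
    exact (isAlltop_comp_addEquiv_iff A (AddEquiv.ofBijective L hbij)).mpr hA

end

theorem alltop_comp_additive_iff_general (p r : ℕ) [Fact p.Prime]
    (A L : GaloisField p r → GaloisField p r) (hL : IsAdditive L) :
    IsAlltop (A ∘ L) ↔ IsAlltop A ∧ Function.Bijective L :=
  isAlltop_comp_addMonoidHom_iff A (AddMonoidHom.mk' L hL)

theorem alltop_comp_additive_iff (p r : ℕ) [Fact p.Prime] (hp : 5 ≤ p) (hr : 0 < r)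
    (A L : GaloisField p r → GaloisField p r) (hL : IsAdditive L) :
    IsAlltop (A ∘ L) ↔ IsAlltop A ∧ Function.Bijective L :=
  alltop_comp_additive_iff_general p r A L hL
end

section
/- Let p ≥ 5 be a prime, F = F_{p^r}, A : F → F any function and L : F → F an additive polynomial function. Then the composition L ∘ A is an Alltop function on F if and only if A is an Alltop function and L is a bijection of F. -/
open Finset

/-! Additivity of `L` gives `Δ_{L ∘ f, a} = L ∘ Δ_{f, a}`, so every second difference of `L ∘ A`
is `L` composed with the corresponding second difference of `A`. On a finite field, bijectivity of
`L ∘ g` forces `g` to be injective and `L` surjective, hence both bijective. -/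

section

variable {F : Type*} [Field F] {L f A : F → F}

theorem IsAdditive.map_sub (hL : IsAdditive L) (x y : F) : L (x - y) = L x - L y :=
  (AddMonoidHom.mk' L hL).map_sub x y

theorem IsAdditive.deltaFn_comp (hL : IsAdditive L) (f : F → F) (a : F) :
    deltaFn (L ∘ f) a = L ∘ deltaFn f a := by
  funext x
  simp only [deltaFn, Function.comp_apply, hL.map_sub]

theorem IsPlanar.comp (hf : IsPlanar f) (hL : IsAdditive L) (hL' : Function.Bijective L) :
    IsPlanar (L ∘ f) := fun a ha => by
  rw [hL.deltaFn_comp]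
  exact hL'.comp (hf a ha)

theorem IsPlanar.of_comp [Finite F] (h : IsPlanar (L ∘ f)) (hL : IsAdditive L) : IsPlanar f :=
  fun a ha => by
    have hbij := h a ha
    rw [hL.deltaFn_comp] at hbij
    exact Finite.injective_iff_bijective.mp hbij.injective.of_comp

theorem IsPlanar.surjective_of_comp (h : IsPlanar (L ∘ f)) (hL : IsAdditive L) :
    Function.Surjective L := by
  have hbij := h 1 one_ne_zero
  rw [hL.deltaFn_comp] at hbij
  exact hbij.surjective.of_comp

theorem IsAlltop.comp (hA : IsAlltop A) (hL : IsAdditive L) (hL' : Function.Bijective L) :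
    IsAlltop (L ∘ A) := fun a ha => by
  rw [hL.deltaFn_comp]
  exact (hA a ha).comp hL hL'

theorem IsAlltop.of_comp [Finite F] (h : IsAlltop (L ∘ A)) (hL : IsAdditive L) : IsAlltop A :=
  fun a ha => by
    have hplanar := h a ha
    rw [hL.deltaFn_comp] at hplanar
    exact hplanar.of_comp hL

theorem IsAlltop.bijective_of_comp [Finite F] (h : IsAlltop (L ∘ A)) (hL : IsAdditive L) :
    Function.Bijective L := by
  have hplanar := h 1 one_ne_zero
  rw [hL.deltaFn_comp] at hplanar
  exact Finite.surjective_iff_bijective.mp (hplanar.surjective_of_comp hL)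

end

theorem additive_comp_alltop_iff_general (p r : ℕ) [Fact p.Prime]
    (A L : GaloisField p r → GaloisField p r) (hL : IsAdditive L) :
    IsAlltop (L ∘ A) ↔ IsAlltop A ∧ Function.Bijective L :=
  ⟨fun h => ⟨h.of_comp hL, h.bijective_of_comp hL⟩, fun ⟨hA, hL'⟩ => hA.comp hL hL'⟩

theorem additive_comp_alltop_iff (p r : ℕ) [Fact p.Prime] (hp : 5 ≤ p) (hr : 0 < r)
    (A L : GaloisField p r → GaloisField p r) (hL : IsAdditive L) :
    IsAlltop (L ∘ A) ↔ IsAlltop A ∧ Function.Bijective L :=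
  additive_comp_alltop_iff_general p r A L hL
end

section
/- Let p ≥ 5 be a prime and F = F_{p^r}. Let l1, l2, l3 : F → F be affine functions with l1 and l2 bijections, write l2(x) = L2(x) + c2 with L2 additive, and let d : F → F be a Dembowski–Ostrom polynomial function. Let A : F → F be an Alltop function and A'(x) = l1(A(l2(x))) + d(x) + l3(x). Then for every b ∈ F with b ≠ 0, the difference function Δ_{A',b} is EA-equivalent to Δ_{A,L2(b)} (and L2(b) ≠ 0). -/
open Finset

/-!
Differencing commutes with affine changes of variables: if `l₁ = L₁ + c₁` and `l₂ = L₂ + c₂`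
with `L₁, L₂` additive, then `Δ_{l₁ ∘ f ∘ l₂, b} = L₁ ∘ Δ_{f, L₂ b} ∘ l₂`. The derivatives of a
Dembowski–Ostrom polynomial and of an affine function are affine, so the contribution of `d + l₃`
to `Δ_{A', b}` is absorbed into the affine term of an EA-equivalence.
-/

section Affine

variable {F : Type*} [Field F]

theorem IsAdditive.map_zero {L : F → F} (hL : IsAdditive L) : L 0 = 0 := by
  simpa using hL 0 0

theorem IsAdditive.isAffine {L : F → F} (hL : IsAdditive L) : IsAffine L :=
  ⟨L, 0, hL, fun _ => (add_zero _).symm⟩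

theorem isAffine_const (c : F) : IsAffine (fun _ : F => c) :=
  ⟨fun _ => 0, c, fun _ _ => (add_zero 0).symm, fun _ => (zero_add c).symm⟩

theorem IsAffine.add {f g : F → F} (hf : IsAffine f) (hg : IsAffine g) :
    IsAffine (fun x => f x + g x) := by
  obtain ⟨L, c, hL, hfL⟩ := hf
  obtain ⟨M, e, hM, hgM⟩ := hg
  refine ⟨fun x => L x + M x, c + e, fun x y => ?_, fun x => ?_⟩
  · dsimp only; rw [hL, hM]; ring
  · simp only [hfL, hgM]; ring

theorem map_add_of_eq_add_const {l L : F → F} {c : F} (hl : ∀ x, l x = L x + c)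
    (hL : IsAdditive L) (x y : F) : l (x + y) = l x + L y := by
  rw [hl, hl, hL]; ring

theorem bijective_of_eq_add_const {l L : F → F} {c : F} (hl : ∀ x, l x = L x + c)
    (hlb : Function.Bijective l) : Function.Bijective L := by
  have hL : L = fun x => l x - c := funext fun x => by rw [hl]; ring
  exact hL ▸ (Equiv.subRight c).bijective.comp hlb

theorem deltaFn_add (f g : F → F) (a : F) :
    deltaFn (fun x => f x + g x) a = fun x => deltaFn f a x + deltaFn g a x := by
  funext x; simp only [deltaFn]; ring

theorem IsAffine.isAffine_deltaFn {l : F → F} (hl : IsAffine l) (a : F) :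
    IsAffine (deltaFn l a) := by
  obtain ⟨L, c, hL, hlL⟩ := hl
  have hconst : deltaFn l a = fun _ => L a :=
    funext fun x => by rw [deltaFn, map_add_of_eq_add_const hlL hL]; ring
  exact hconst ▸ isAffine_const (L a)

theorem eaEquiv_deltaFn_of_eq_comp_add {f f' l1 l2 L2 e : F → F} {c2 : F} (b : F)
    (hl1 : IsAffine l1) (hl1b : Function.Bijective l1)
    (hL2 : IsAdditive L2) (hl2 : ∀ x, l2 x = L2 x + c2) (hl2b : Function.Bijective l2)
    (he : IsAffine (deltaFn e b)) (hf' : ∀ x, f' x = l1 (f (l2 x)) + e x) :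
    EAEquiv (deltaFn f' b) (deltaFn f (L2 b)) := by
  obtain ⟨L1, c1, hL1, hl1L⟩ := hl1
  refine ⟨L1, l2, deltaFn e b, hL1.isAffine, ⟨L2, c2, hL2, hl2⟩, he,
    bijective_of_eq_add_const hl1L hl1b, hl2b, fun x => ?_⟩
  have hf_shift : f (l2 (x + b)) = f (l2 x) + deltaFn f (L2 b) (l2 x) := by
    rw [map_add_of_eq_add_const hl2 hL2, deltaFn]; ring
  simp only [deltaFn, hf', hf_shift, map_add_of_eq_add_const hl1L hL1]
  ring

end Affine

theorem add_pow_expChar_pow_add_expChar_pow {R : Type*} [CommSemiring R] (p : ℕ) [ExpChar R p]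
    (x b : R) (i j : ℕ) :
    (x + b) ^ (p ^ i + p ^ j) =
      x ^ (p ^ i + p ^ j) + (b ^ p ^ i * x ^ p ^ j + b ^ p ^ j * x ^ p ^ i) +
        b ^ (p ^ i + p ^ j) := by
  simp only [pow_add, add_pow_expChar_pow]
  ring

/-- Each monomial `x ^ (p ^ i + p ^ j)` is a product of two additive Frobenius powers, so its
derivative is additive up to a constant. -/
theorem IsDembowskiOstrom.isAffine_deltaFn {p r : ℕ} [Fact p.Prime]
    {d : GaloisField p r → GaloisField p r} (hd : IsDembowskiOstrom p r d) (b : GaloisField p r) :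
    IsAffine (deltaFn d b) := by
  obtain ⟨a, hda⟩ := hd
  refine ⟨fun x => ∑ i ∈ range r, ∑ j ∈ range r,
      a i j * (b ^ p ^ i * x ^ p ^ j + b ^ p ^ j * x ^ p ^ i), d b, fun x y => ?_, fun x => ?_⟩
  · simp only [add_pow_expChar_pow, ← sum_add_distrib]
    congr! 2 with i _ j _
    ring
  · simp only [deltaFn, hda, add_pow_expChar_pow_add_expChar_pow, mul_add, sum_add_distrib]
    ring

theorem delta_of_EA_image_EAequiv_delta_general (p r : ℕ) [Fact p.Prime]
    (l1 l2 l3 d A : GaloisField p r → GaloisField p r)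
    (L2 : GaloisField p r → GaloisField p r) (c2 : GaloisField p r)
    (hl1 : IsAffine l1) (hl3 : IsAffine l3)
    (hl1b : Function.Bijective l1) (hl2b : Function.Bijective l2)
    (hL2 : IsAdditive L2) (hl2eq : ∀ x, l2 x = L2 x + c2)
    (hd : IsDembowskiOstrom p r d)
    (A' : GaloisField p r → GaloisField p r)
    (hA' : ∀ x, A' x = l1 (A (l2 x)) + d x + l3 x) :
    ∀ b : GaloisField p r, b ≠ 0 →
      L2 b ≠ 0 ∧ EAEquiv (deltaFn A' b) (deltaFn A (L2 b)) := by
  intro b hb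
  have hL2b : L2 b ≠ 0 :=
    hL2.map_zero ▸ (bijective_of_eq_add_const hl2eq hl2b).injective.ne hb
  have he : IsAffine (deltaFn (fun x => d x + l3 x) b) := by
    rw [deltaFn_add]
    exact (hd.isAffine_deltaFn b).add (hl3.isAffine_deltaFn b)
  exact ⟨hL2b, eaEquiv_deltaFn_of_eq_comp_add b hl1 hl1b hL2 hl2eq hl2b he
    fun x => by rw [hA', add_assoc]⟩

theorem delta_of_EA_image_EAequiv_delta (p r : ℕ) [Fact p.Prime] (hp : 5 ≤ p) (hr : 0 < r)
    (l1 l2 l3 d A : GaloisField p r → GaloisField p r)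
    (L2 : GaloisField p r → GaloisField p r) (c2 : GaloisField p r)
    (hl1 : IsAffine l1) (hl2 : IsAffine l2) (hl3 : IsAffine l3)
    (hl1b : Function.Bijective l1) (hl2b : Function.Bijective l2)
    (hL2 : IsAdditive L2) (hl2eq : ∀ x, l2 x = L2 x + c2)
    (hd : IsDembowskiOstrom p r d) (hA : IsAlltop A)
    (A' : GaloisField p r → GaloisField p r)
    (hA' : ∀ x, A' x = l1 (A (l2 x)) + d x + l3 x) :
    ∀ b : GaloisField p r, b ≠ 0 →
      L2 b ≠ 0 ∧ EAEquiv (deltaFn A' b) (deltaFn A (L2 b)) :=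
  delta_of_EA_image_EAequiv_delta_general p r l1 l2 l3 d A L2 c2 hl1 hl3 hl1b hl2b hL2 hl2eq hd A'
    hA'
end

section
/- Let p ≥ 5 be a prime with p ≡ 2 (mod 3). Then the function A(x) = x^{p+2} is not an Alltop function on the field F_{p^2}. -/
open Finset

/-!
Since `x ↦ x ^ p` is additive, the second difference `Δ_b Δ_a` of `x ^ (p + 2) = x ^ p * x ^ 2` is a
constant plus the additive map `x ↦ 2 * ((a ^ p * b + a * b ^ p) * x + a * b * x ^ p)`. Take `a = 1`
and `b = λ` with `λ ^ (p - 1)` a primitive cube root of unity, which exists in `𝔽_{p²}` because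
`3 (p - 1) ∣ p² - 1` when `p ≡ 2 (mod 3)`; then `x = λ ^ 2 ≠ 0` lies in the kernel of that map,
so `Δ_λ Δ_1` takes the same value at `λ ^ 2` and at `0`.
-/

theorem deltaFn_deltaFn_pow_add_two {F : Type*} [Field F] {p : ℕ} [ExpChar F p] (a b x : F) :
    deltaFn (deltaFn (· ^ (p + 2)) a) b x = deltaFn (deltaFn (· ^ (p + 2)) a) b 0 +
      2 * ((a ^ p * b + a * b ^ p) * x + a * b * x ^ p) := by
  have hp : p ≠ 0 := (expChar_pos F p).ne'
  simp only [deltaFn, pow_add, add_pow_expChar, zero_pow hp, zero_add]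
  ring

theorem not_isAlltop_pow_add_two {F : Type*} [Field F] {p : ℕ} [ExpChar F p] {a b x : F}
    (ha : a ≠ 0) (hb : b ≠ 0) (hx : x ≠ 0)
    (h : (a ^ p * b + a * b ^ p) * x + a * b * x ^ p = 0) :
    ¬ IsAlltop (· ^ (p + 2) : F → F) := fun hA ↦
  hx <| (hA a ha b hb).injective <| by rw [deltaFn_deltaFn_pow_add_two a b x, h, mul_zero, add_zero]

theorem exists_isPrimitiveRoot_of_dvd_card_sub_one {F : Type*} [Field F] [Finite F] {n : ℕ}
    (hn : n ∣ Nat.card F - 1) : ∃ ζ : F, IsPrimitiveRoot ζ n := by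
  obtain ⟨g, hg⟩ := IsCyclic.exists_ofOrder_eq_natCard (α := Fˣ)
  rw [Nat.card_units] at hg
  obtain ⟨m, hm⟩ := hn
  have hpos : 0 < Nat.card F - 1 := Nat.sub_pos_of_lt Finite.one_lt_card
  exact ⟨_, (IsPrimitiveRoot.coe_units_iff.mpr (hg ▸ IsPrimitiveRoot.orderOf g)).pow hpos
    (hm.trans (mul_comm n m))⟩

theorem add_pow_mul_sq_add_mul_sq_pow_eq_zero {F : Type*} [Field F] {p : ℕ} (hp : p ≠ 0)
    {l : F} (hl : IsPrimitiveRoot (l ^ (p - 1)) 3) :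
    (l + l ^ p) * l ^ 2 + l * (l ^ 2) ^ p = 0 := by
  have hlp : l ^ p = l ^ (p - 1) * l := by
    rw [← pow_succ, Nat.sub_add_cancel (Nat.one_le_iff_ne_zero.mpr hp)]
  have hcube : 1 + l ^ (p - 1) + (l ^ (p - 1)) ^ 2 = 0 := by
    simpa [Finset.sum_range_succ] using hl.geom_sum_eq_zero (by norm_num)
  rw [← pow_mul, mul_comm 2 p, pow_mul, hlp]
  linear_combination l ^ 3 * hcube

theorem pow_p_add_two_not_alltop_general (p : ℕ) [Fact p.Prime] (hp3 : p % 3 = 2) :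
    ¬ IsAlltop (fun x : GaloisField p 2 => x ^ (p + 2)) := by
  have hp : p.Prime := Fact.out
  have hdvd : 3 * (p - 1) ∣ Nat.card (GaloisField p 2) - 1 := by
    rw [GaloisField.card p 2 two_ne_zero, ← one_pow 2, Nat.sq_sub_sq]
    exact Nat.mul_dvd_mul_right (by omega) _
  obtain ⟨ζ, hζ⟩ := exists_isPrimitiveRoot_of_dvd_card_sub_one hdvd
  have hζ0 : ζ ≠ 0 := hζ.ne_zero (by omega)
  have hcube : IsPrimitiveRoot (ζ ^ (p - 1)) 3 := hζ.pow (by omega) (mul_comm _ _)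
  refine not_isAlltop_pow_add_two one_ne_zero hζ0 (pow_ne_zero 2 hζ0) ?_
  simpa using add_pow_mul_sq_add_mul_sq_pow_eq_zero hp.ne_zero hcube

theorem pow_p_add_two_not_alltop (p : ℕ) [Fact p.Prime] (hp : 5 ≤ p) (hp3 : p % 3 = 2) :
    ¬ IsAlltop (fun x : GaloisField p 2 => x ^ (p + 2)) :=
  pow_p_add_two_not_alltop_general p hp3
end

section
/- Let p ≥ 5 be a prime and r a positive integer such that 3 does not divide p^r + 1. Then for every a ∈ F_{p^{2r}} with a ≠ 0, the function Π_a(x) = 2a·x^{p^r + 1} + a^{p^r}·x^2 is a planar function on F_{p^{2r}}. -/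
open Finset

/-!
Write `σ x = x ^ p ^ r`, an involutive automorphism of `F_{p^{2r}}`, so that
`Π_a(x) = 2a·x·σx + σa·x²`. Then `Δ_{Π_a,b}` is affine with linear part
`z ↦ 2(ab·σz + c·z)`, `c = a·σb + σa·b`, and planarity means this has trivial kernel.
If `ab·σz = -c·z` with `z ≠ 0`, multiplying by the `σ`-conjugate equation gives
`c² = ab·σa·σb`, i.e. `ω = a·σb / (σa·b)` satisfies `ω² + ω + 1 = 0`. But `σω = ω⁻¹`,
while `σ` fixes the cube roots of unity because `p ^ r ≡ 1 (mod 3)` (3 divides neither `p ^ r` nor `p ^ r + 1`); hence `ω² = 1`,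
so `ω = 1` and `3 = 0`, which is impossible for `p ≥ 5`.
-/

section Involution

variable {F : Type*} [Field F] (σ : F →+* F)

lemma deltaFn_sub_deltaFn (a b x y : F) :
    deltaFn (fun x => 2 * a * (σ x * x) + σ a * x ^ 2) b x
      - deltaFn (fun x => 2 * a * (σ x * x) + σ a * x ^ 2) b y
      = 2 * (a * b * σ (x - y) + (a * σ b + σ a * b) * (x - y)) := by
  simp only [deltaFn, map_add, map_sub]
  ring

variable {σ} (h3 : (3 : F) ≠ 0) (hfix : ∀ ω : F, ω ^ 3 = 1 → σ ω = ω)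
include h3 hfix

lemma map_ne_inv_of_sq_add_self_add_one_eq_zero {ω : F} (hω : ω ^ 2 + ω + 1 = 0) :
    σ ω ≠ ω⁻¹ := by
  intro hσω
  have hω3 : ω ^ 3 = 1 := by linear_combination (ω - 1) * hω
  have hinv : ω⁻¹ = ω := hσω.symm.trans (hfix ω hω3)
  have hω0 : ω ≠ 0 := by rintro rfl; norm_num at hω
  have hω2 : ω ^ 2 = 1 := by
    rw [pow_two]
    nth_rw 1 [← hinv]
    exact inv_mul_cancel₀ hω0
  exact h3 (by linear_combination hω + (ω - 1) * hω2 - hω3)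

variable (hσ : Function.Involutive σ)
include hσ

lemma sq_add_mul_map_add_map_sq_ne_zero {u : F} (hu : u ≠ 0) :
    u ^ 2 + u * σ u + σ u ^ 2 ≠ 0 := by
  intro hquad
  have hσu : σ u ≠ 0 := (map_ne_zero σ).mpr hu
  refine map_ne_inv_of_sq_add_self_add_one_eq_zero h3 hfix (ω := u / σ u) ?_ ?_
  · field_simp
    linear_combination hquad
  · rw [map_div₀, hσ u, inv_div]

lemma eq_zero_of_mul_map_add_mul_eq_zero {a b z : F} (ha : a ≠ 0) (hb : b ≠ 0)
    (hz : a * b * σ z + (a * σ b + σ a * b) * z = 0) : z = 0 := by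
  by_contra hz0
  have hσz : σ a * σ b * z + (σ a * b + a * σ b) * σ z = 0 := by
    simpa only [map_add, map_mul, hσ _, map_zero] using congrArg σ hz
  have hσab : σ (a * σ b) = σ a * b := by rw [map_mul, hσ b]
  have hquad : ((a * σ b) ^ 2 + (a * σ b) * σ (a * σ b) + σ (a * σ b) ^ 2) * (z * σ z) = 0 := by
    rw [hσab]
    linear_combination (-(σ a * σ b * z)) * hz + ((a * σ b + σ a * b) * z) * hσz
  refine sq_add_mul_map_add_map_sq_ne_zero h3 hfix hσ (mul_ne_zero ha ((map_ne_zero σ).mpr hb))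
    ((mul_eq_zero.mp hquad).resolve_right (mul_ne_zero hz0 ((map_ne_zero σ).mpr hz0)))

lemma isPlanar_of_involutive [Finite F] (h2 : (2 : F) ≠ 0) {a : F} (ha : a ≠ 0) :
    IsPlanar (fun x => 2 * a * (σ x * x) + σ a * x ^ 2) := by
  intro b hb
  rw [← Finite.injective_iff_bijective]
  intro x y hxy
  rw [← sub_eq_zero, deltaFn_sub_deltaFn, mul_eq_zero] at hxy
  exact sub_eq_zero.mp (eq_zero_of_mul_map_add_mul_eq_zero h3 hfix hσ ha hb (hxy.resolve_left h2))

end Involution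

lemma GaloisField.pow_prime_pow_self (p n : ℕ) [Fact p.Prime] (x : GaloisField p n) :
    x ^ p ^ n = x := by
  rcases eq_or_ne n 0 with rfl | hn
  · rw [pow_zero, pow_one]
  · have : Fintype (GaloisField p n) := Fintype.ofFinite _
    rw [← GaloisField.card p n hn, Nat.card_eq_fintype_card, FiniteField.pow_card]

lemma GaloisField.iterateFrobenius_involutive (p r : ℕ) [Fact p.Prime] :
    Function.Involutive (iterateFrobenius (GaloisField p (2 * r)) p r) := fun x => by
  simp only [iterateFrobenius_def, ← pow_mul, ← pow_add, ← two_mul, GaloisField.pow_prime_pow_self]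

lemma pow_eq_self_of_pow_three_eq_one {M : Type*} [Monoid M] {ω : M} (hω : ω ^ 3 = 1) {n : ℕ}
    (hn : n % 3 = 1) : ω ^ n = ω := by
  rw [pow_eq_pow_mod n hω, hn, pow_one]

theorem pi_a_planar_general (p r : ℕ) [Fact p.Prime] (hp : 5 ≤ p)
    (h3 : ¬ (3 ∣ p ^ r + 1)) :
    ∀ a : GaloisField p (2 * r), a ≠ 0 →
      IsPlanar (fun x : GaloisField p (2 * r) =>
        2 * a * x ^ (p ^ r + 1) + a ^ (p ^ r) * x ^ 2) := by
  intro a ha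
  set σ := iterateFrobenius (GaloisField p (2 * r)) p r
  have hq : p ^ r % 3 = 1 := by
    have : ¬ 3 ∣ p ^ r := fun h => by
      have := (Nat.prime_dvd_prime_iff_eq Nat.prime_three Fact.out).mp
        (Nat.prime_three.dvd_of_dvd_pow h)
      omega
    omega
  have hfix (ω : GaloisField p (2 * r)) (hω : ω ^ 3 = 1) : σ ω = ω :=
    pow_eq_self_of_pow_three_eq_one hω hq
  have hne (ℓ : ℕ) (hℓ : ℓ.Prime) (hℓp : ℓ < p) : (ℓ : GaloisField p (2 * r)) ≠ 0 :=
    CharP.cast_ne_zero_of_ne_of_prime _ hℓ (by omega)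
  have h2 : (2 : GaloisField p (2 * r)) ≠ 0 := by exact_mod_cast hne 2 Nat.prime_two (by omega)
  have h3F : (3 : GaloisField p (2 * r)) ≠ 0 := by exact_mod_cast hne 3 Nat.prime_three (by omega)
  have hpi : (fun x : GaloisField p (2 * r) => 2 * a * x ^ (p ^ r + 1) + a ^ (p ^ r) * x ^ 2) =
      fun x => 2 * a * (σ x * x) + σ a * x ^ 2 := by
    funext x
    rw [pow_succ]
    rfl
  rw [hpi]
  exact isPlanar_of_involutive h3F hfix (GaloisField.iterateFrobenius_involutive p r) h2 ha

theorem pi_a_planar (p r : ℕ) [Fact p.Prime] (hp : 5 ≤ p) (hr : 0 < r)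
    (h3 : ¬ (3 ∣ p ^ r + 1)) :
    ∀ a : GaloisField p (2 * r), a ≠ 0 →
      IsPlanar (fun x : GaloisField p (2 * r) =>
        2 * a * x ^ (p ^ r + 1) + a ^ (p ^ r) * x ^ 2) :=
  pi_a_planar_general p r hp h3
end

section
/- Let p ≥ 5 be a prime, r a positive integer, and F = F_{p^{2r}}. There exists γ ∈ F with γ^2 = −3 (where 3 denotes 1+1+1 in F), and for any such γ and any a ∈ F with a ≠ 0, the identity a^{p^r}·(2a x^{p^r+1} + a^{p^r} x^2) + ((−1+γ)/2)·a·(2a x^{p^r+1} + a^{p^r} x^2)^{p^r} = (a^{p^r} x + ((1+γ)/2)·a·x^{p^r})^2 holds for all x ∈ F. -/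
open Finset

/-!
The Frobenius map `σ x = x ^ p ^ r` is an involution of `F`, so `Π_a ^ σ = 2 σa x σx + a σx ^ 2`
and the identity becomes a polynomial identity in `a, σa, x, σx`; it holds because
`c = (1 + γ) / 2` is a root of `X ^ 2 - X + 1` and `(-1 + γ) / 2 = c - 1`.
A square root of `-3` exists because `-3` is fixed by `σ`, and every element of the subfield
`F_{p^r}` is a square in `F_{p^{2r}}`.
-/

theorem FiniteField.pow_pow_eq_self_of_card_eq_sq {K : Type*} [Field K] [Finite K] {q : ℕ}
    (hcard : Nat.card K = q ^ 2) (z : K) : (z ^ q) ^ q = z := by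
  cases nonempty_fintype K
  rw [← pow_mul, ← sq, ← hcard, Nat.card_eq_fintype_card, FiniteField.pow_card]

theorem FiniteField.isSquare_of_pow_eq_self {K : Type*} [Field K] [Finite K] {q : ℕ}
    (hcard : Nat.card K = q ^ 2) {z : K} (hz : z ^ q = z) : IsSquare z := by
  cases nonempty_fintype K
  rcases eq_or_ne z 0 with rfl | hz0
  · exact ⟨0, by simp⟩
  by_cases hchar : ringChar K = 2
  · exact isSquare_of_char_two hchar z
  obtain ⟨k, rfl⟩ : Odd q := by
    have hodd := odd_card_of_char_ne_two hchar
    rw [← Nat.card_eq_fintype_card, hcard, ← Nat.odd_iff, Nat.odd_pow_iff two_ne_zero] at hodd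
    exact hodd
  -- Euler's criterion: for odd `q`, the exponent `(q ^ 2 - 1) / 2` is a multiple of `q - 1`.
  have hdiv : (2 * k + 1) ^ 2 / 2 = 2 * k * (k + 1) := by
    rw [show (2 * k + 1) ^ 2 = 2 * (2 * k * (k + 1)) + 1 by ring]
    omega
  have hunit : z ^ (2 * k) = 1 := mul_left_cancel₀ hz0 (by rw [← pow_succ', hz, mul_one])
  rw [isSquare_iff hchar hz0, ← Nat.card_eq_fintype_card, hcard, hdiv, pow_mul, hunit, one_pow]

theorem sq_sub_self_add_one_eq_zero_of_sq_eq_neg_three {K : Type*} [Field K] (h2 : (2 : K) ≠ 0)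
    {γ : K} (hγ : γ ^ 2 = -3) : ((1 + γ) / 2) ^ 2 - (1 + γ) / 2 + 1 = 0 := by
  field_simp
  linear_combination hγ

theorem RingHom.mul_add_mul_map_eq_sq {R : Type*} [CommRing R] {σ : R →+* R}
    (hσ : ∀ z, σ (σ z) = z) {c : R} (hc : c ^ 2 - c + 1 = 0) (a x : R) :
    σ a * (2 * a * (σ x * x) + σ a * x ^ 2) +
        (c - 1) * a * σ (2 * a * (σ x * x) + σ a * x ^ 2) =
      (σ a * x + c * a * σ x) ^ 2 := by
  simp only [map_add, map_mul, map_pow, map_ofNat, hσ]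
  linear_combination (-(a ^ 2 * σ x ^ 2)) * hc

theorem pi_a_square_identity (p r : ℕ) [Fact p.Prime] (hp : 5 ≤ p) (hr : 0 < r) :
    (∃ γ : GaloisField p (2 * r), γ ^ 2 = -3) ∧
    ∀ γ : GaloisField p (2 * r), γ ^ 2 = -3 →
      ∀ a : GaloisField p (2 * r), a ≠ 0 → ∀ x : GaloisField p (2 * r),
        a ^ (p ^ r) * (2 * a * x ^ (p ^ r + 1) + a ^ (p ^ r) * x ^ 2) +
          ((-1 + γ) / 2) * a * (2 * a * x ^ (p ^ r + 1) + a ^ (p ^ r) * x ^ 2) ^ (p ^ r) =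
        (a ^ (p ^ r) * x + ((1 + γ) / 2) * a * x ^ (p ^ r)) ^ 2 := by
  set F := GaloisField p (2 * r)
  have hcard : Nat.card F = (p ^ r) ^ 2 := by rw [GaloisField.card p _ (by omega), pow_mul']
  have h2 : (2 : F) ≠ 0 := Ring.two_ne_zero (by rw [ringChar.eq F p]; omega)
  refine ⟨?_, fun γ hγ a _ x => ?_⟩
  · obtain ⟨γ, hγ⟩ := FiniteField.isSquare_of_pow_eq_self hcard (z := (-3 : F))
      (by rw [← iterateFrobenius_def, map_neg, map_ofNat])
    exact ⟨γ, by rw [sq, hγ]⟩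
  · have hσ (z : F) : iterateFrobenius F p r (iterateFrobenius F p r z) = z := by
      simpa only [iterateFrobenius_def] using FiniteField.pow_pow_eq_self_of_card_eq_sq hcard z
    have hd : (-1 + γ) / 2 = (1 + γ) / 2 - 1 := by field_simp; ring
    rw [hd]
    simpa only [iterateFrobenius_def, pow_succ] using
      RingHom.mul_add_mul_map_eq_sq hσ (sq_sub_self_add_one_eq_zero_of_sq_eq_neg_three h2 hγ) a x
end

section
/- Let p ≥ 5 be a prime and r a positive integer. Then the function A(x) = x^{p^r + 2} on F_{p^{2r}} is not EA-equivalent to the function x ↦ x^3. -/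
open Finset

section Aux

open Polynomial

variable {F : Type*} [Field F]

lemma isAdditive_map_zero {L : F → F} (h : IsAdditive L) : L 0 = 0 := by
  have h0 := h 0 0
  rw [add_zero] at h0
  exact (left_eq_add.mp h0)

lemma isAdditive_sub {L : F → F} (h : IsAdditive L) (x y : F) : L (x - y) = L x - L y := by
  have h0 := h (x - y) y
  rw [sub_add_cancel] at h0
  rw [h0]; ring

lemma exists_eval_ne [Fintype F] {Q : F[X]} (hQ : Q ≠ 0) (h : Q.natDegree < Fintype.card F) :
    ∃ x : F, Q.eval x ≠ 0 := by
  refine Q.exists_eval_ne_zero_of_natDegree_lt_card hQ ?_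
  rw [Cardinal.mk_fintype]
  exact_mod_cast h

lemma Xpow_sub_X_ne {t : ℕ} (ht : 1 < t) : ((X : F[X]) ^ t - X) ≠ 0 := by
  intro hP
  have hc := congrArg (fun Q : F[X] => Q.coeff t) hP
  simp only [coeff_sub, coeff_X_pow, coeff_X, coeff_zero, if_pos rfl,
    if_neg (show ¬(1 = t) by omega)] at hc
  norm_num at hc

lemma Xpow_sub_X_deg {t : ℕ} (ht : 1 < t) : ((X : F[X]) ^ t - X).natDegree ≤ t := by
  refine (natDegree_sub_le _ _).trans ?_
  simp only [natDegree_X_pow, natDegree_X]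
  omega

/-- coefficient extraction for `α x^t + β x = 0`. -/
lemma coeff_ext [Fintype F] {t : ℕ} (ht : 1 < t) (htc : t < Fintype.card F)
    {α β : F} (h : ∀ x : F, α * x ^ t + β * x = 0) : α = 0 ∧ β = 0 := by
  have h1 := h 1
  rw [one_pow, mul_one, mul_one] at h1
  have hβ : β = -α := by linear_combination h1
  by_cases hα : α = 0
  · exact ⟨hα, by rw [hβ, hα, neg_zero]⟩
  · exfalso
    have hall : ∀ x : F, x ^ t = x := by
      intro x
      have hx := h x
      rw [hβ] at hx
      have h0 : α * (x ^ t - x) = 0 := by linear_combination hx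
      rcases mul_eq_zero.mp h0 with h' | h'
      · exact absurd h' hα
      · exact sub_eq_zero.mp h'
    obtain ⟨x, hx⟩ := exists_eval_ne (Xpow_sub_X_ne ht) (lt_of_le_of_lt (Xpow_sub_X_deg ht) htc)
    apply hx
    simp [hall x]

theorem aux_main {K : Type*} [Field K] [Fintype K] (p r : ℕ) [Fact p.Prime] [CharP K p]
    (hp : 5 ≤ p) (hr : 0 < r) (hcard : Fintype.card K = p ^ (2 * r)) :
    ¬ EAEquiv (fun x : K => x ^ (p ^ r + 2)) (fun x : K => x ^ 3) := by
  intro hEA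
  have ht5 : 5 ≤ p ^ r := le_trans hp (Nat.le_self_pow hr.ne' p)
  have ht1 : 1 < p ^ r := by omega
  have hcard' : Fintype.card K = p ^ r * p ^ r := by
    rw [hcard, two_mul, pow_add]
  have htc : p ^ r < Fintype.card K := by
    rw [hcard']; nlinarith
  have two_ne : (2 : K) ≠ 0 := by
    intro h
    have h2 : ((2 : ℕ) : K) = 0 := by exact_mod_cast h
    have hdvd := (CharP.cast_eq_zero_iff K p 2).mp h2
    have := Nat.le_of_dvd (by norm_num) hdvd
    omega
  obtain ⟨l1, l2, l3, ⟨L1, c1, hL1, hl1⟩, ⟨L2, c2, hL2, hl2⟩, ⟨L3, c3, hL3, hl3⟩,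
    hb1, hb2, hfg⟩ := hEA
  have key : ∀ y : K, y ^ (p ^ r + 2) = l1 ((l2 y) ^ 3) + l3 y := fun y => hfg y
  have frob : ∀ x y : K, (x + y) ^ (p ^ r) = x ^ (p ^ r) + y ^ (p ^ r) := fun x y =>
    add_pow_char_pow x y p r
  -- second difference of the left side
  have SDf : ∀ a b x : K,
      (x + a + b) ^ (p ^ r + 2) - (x + a) ^ (p ^ r + 2) - (x + b) ^ (p ^ r + 2)
        + x ^ (p ^ r + 2)
      = 2 * (a * b) * x ^ (p ^ r) + 2 * (a * b ^ (p ^ r) + a ^ (p ^ r) * b) * x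
        + (2 * (a * b) * (a ^ (p ^ r) + b ^ (p ^ r)) + a ^ (p ^ r) * b ^ 2
            + b ^ (p ^ r) * a ^ 2) := by
    intro a b x
    have e1 : (x + a + b) ^ (p ^ r) = x ^ (p ^ r) + a ^ (p ^ r) + b ^ (p ^ r) := by
      rw [frob, frob]
    have e2 : (x + a) ^ (p ^ r) = x ^ (p ^ r) + a ^ (p ^ r) := frob _ _
    have e3 : (x + b) ^ (p ^ r) = x ^ (p ^ r) + b ^ (p ^ r) := frob _ _
    simp only [pow_add, e1, e2, e3]
    ring
  -- second difference, via the EA relation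
  have master : ∀ a b x : K,
      2 * (a * b) * x ^ (p ^ r) + 2 * (a * b ^ (p ^ r) + a ^ (p ^ r) * b) * x
        = L1 (L2 a * L2 b * (6 * L2 x)) := by
    intro a b
    have hl1diff : ∀ u v : K, l1 u - l1 v = L1 (u - v) := by
      intro u v
      rw [hl1, hl1, isAdditive_sub hL1]
      ring
    have hL3' : ∀ x y : K, L3 (x + y) = L3 x + L3 y := hL3
    have hl3sd : ∀ x : K, l3 (x + a + b) - l3 (x + a) - l3 (x + b) + l3 x = 0 := by
      intro x
      simp only [hl3, hL3']
      ring
    have hL2lin : ∀ x y : K, l2 (x + y) = l2 x + L2 y := by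
      intro x y
      rw [hl2, hl2, hL2]
      ring
    have sd : ∀ x : K,
        (x + a + b) ^ (p ^ r + 2) - (x + a) ^ (p ^ r + 2) - (x + b) ^ (p ^ r + 2)
          + x ^ (p ^ r + 2)
        = L1 (6 * L2 a * L2 b * l2 x + 3 * L2 a * L2 b * (L2 a + L2 b)) := by
      intro x
      have hA : l2 (x + a + b) = l2 x + L2 a + L2 b := by rw [hL2lin, hL2lin]
      have hB : l2 (x + a) = l2 x + L2 a := hL2lin x a
      have hC : l2 (x + b) = l2 x + L2 b := hL2lin x b
      calc (x + a + b) ^ (p ^ r + 2) - (x + a) ^ (p ^ r + 2) - (x + b) ^ (p ^ r + 2)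
            + x ^ (p ^ r + 2)
          = (l1 ((l2 (x + a + b)) ^ 3) - l1 ((l2 (x + a)) ^ 3))
            - (l1 ((l2 (x + b)) ^ 3) - l1 ((l2 x) ^ 3))
            + (l3 (x + a + b) - l3 (x + a) - l3 (x + b) + l3 x) := by
              rw [key (x + a + b), key (x + a), key (x + b), key x]; ring
        _ = L1 ((l2 (x + a + b)) ^ 3 - (l2 (x + a)) ^ 3)
            - L1 ((l2 (x + b)) ^ 3 - (l2 x) ^ 3) + 0 := by
              rw [hl1diff, hl1diff, hl3sd]
        _ = L1 (((l2 (x + a + b)) ^ 3 - (l2 (x + a)) ^ 3)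
              - ((l2 (x + b)) ^ 3 - (l2 x) ^ 3)) := by
              rw [← isAdditive_sub hL1]; ring
        _ = L1 (6 * L2 a * L2 b * l2 x + 3 * L2 a * L2 b * (L2 a + L2 b)) := by
              congr 1
              rw [hA, hB, hC]
              ring
    intro x
    have hx := (SDf a b x).symm.trans (sd x)
    have h0 := (SDf a b 0).symm.trans (sd 0)
    have hzp : (0 : K) ^ (p ^ r) = 0 := zero_pow (by positivity)
    have hL20 : L2 0 = 0 := isAdditive_map_zero hL2
    calc 2 * (a * b) * x ^ (p ^ r) + 2 * (a * b ^ (p ^ r) + a ^ (p ^ r) * b) * x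
        = (2 * (a * b) * x ^ (p ^ r) + 2 * (a * b ^ (p ^ r) + a ^ (p ^ r) * b) * x
            + (2 * (a * b) * (a ^ (p ^ r) + b ^ (p ^ r)) + a ^ (p ^ r) * b ^ 2
              + b ^ (p ^ r) * a ^ 2))
          - (2 * (a * b) * (0 : K) ^ (p ^ r) + 2 * (a * b ^ (p ^ r) + a ^ (p ^ r) * b) * 0
            + (2 * (a * b) * (a ^ (p ^ r) + b ^ (p ^ r)) + a ^ (p ^ r) * b ^ 2
              + b ^ (p ^ r) * a ^ 2)) := by rw [hzp]; ring
      _ = L1 (6 * L2 a * L2 b * l2 x + 3 * L2 a * L2 b * (L2 a + L2 b))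
          - L1 (6 * L2 a * L2 b * l2 0 + 3 * L2 a * L2 b * (L2 a + L2 b)) := by rw [hx, h0]
      _ = L1 ((6 * L2 a * L2 b * l2 x + 3 * L2 a * L2 b * (L2 a + L2 b))
          - (6 * L2 a * L2 b * l2 0 + 3 * L2 a * L2 b * (L2 a + L2 b))) := by
            rw [isAdditive_sub hL1]
      _ = L1 (L2 a * L2 b * (6 * L2 x)) := by
            congr 1
            rw [hl2 x, hl2 0, hL20]
            ring
  -- the key comparison
  have keyPD : ∀ a b a' b' : K, L2 a * L2 b = L2 a' * L2 b' →
      a * b = a' * b' ∧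
        a * b ^ (p ^ r) + a ^ (p ^ r) * b = a' * b' ^ (p ^ r) + a' ^ (p ^ r) * b' := by
    intro a b a' b' hprod
    have hall : ∀ x : K,
        (2 * (a * b) - 2 * (a' * b')) * x ^ (p ^ r)
          + (2 * (a * b ^ (p ^ r) + a ^ (p ^ r) * b)
            - 2 * (a' * b' ^ (p ^ r) + a' ^ (p ^ r) * b')) * x = 0 := by
      intro x
      have h1 := master a b x
      have h2 := master a' b' x
      rw [hprod] at h1
      linear_combination h1 - h2
    obtain ⟨hc1, hc2⟩ := coeff_ext ht1 htc hall
    constructor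
    · have : (2 : K) * (a * b - a' * b') = 0 := by linear_combination hc1
      rcases mul_eq_zero.mp this with h' | h'
      · exact absurd h' two_ne
      · exact sub_eq_zero.mp h'
    · have : (2 : K) * ((a * b ^ (p ^ r) + a ^ (p ^ r) * b)
          - (a' * b' ^ (p ^ r) + a' ^ (p ^ r) * b')) = 0 := by linear_combination hc2
      rcases mul_eq_zero.mp this with h' | h'
      · exact absurd h' two_ne
      · exact sub_eq_zero.mp h'
  -- choice of the auxiliary λ for each nonzero c
  have hlamex : ∀ c : K, c ≠ 0 → ∃ l : K, l ≠ 0 ∧ l ^ (p ^ r) - l ≠ 0 ∧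
      c ^ (p ^ r) * l - c * l ^ (p ^ r) ≠ 0 := by
    intro c hc
    classical
    set Q : Polynomial K :=
      Polynomial.X * ((Polynomial.X : Polynomial K) ^ (p ^ r) - Polynomial.X)
        * (Polynomial.C (c ^ (p ^ r)) * Polynomial.X
            - Polynomial.C c * Polynomial.X ^ (p ^ r)) with hQdef
    have h3ne : (Polynomial.C (c ^ (p ^ r)) * Polynomial.X
        - Polynomial.C c * Polynomial.X ^ (p ^ r)) ≠ (0 : Polynomial K) := by
      intro hP
      have hcoe := congrArg (fun Q : Polynomial K => Q.coeff (p ^ r)) hP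
      simp only [Polynomial.coeff_sub, Polynomial.coeff_C_mul, Polynomial.coeff_X_pow,
        Polynomial.coeff_zero, Polynomial.coeff_X, if_pos rfl,
        if_neg (show ¬((1:ℕ) = p ^ r) by omega),
        mul_zero, mul_one, zero_sub, neg_eq_zero] at hcoe
      simp only [if_true, mul_one] at hcoe
      exact hc hcoe
    have hQne : Q ≠ 0 := by
      rw [hQdef]
      exact mul_ne_zero (mul_ne_zero Polynomial.X_ne_zero (Xpow_sub_X_ne ht1)) h3ne
    have hQdeg : Q.natDegree < Fintype.card K := by
      have b1 : (Polynomial.X : Polynomial K).natDegree = 1 := Polynomial.natDegree_X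
      have b2 := Xpow_sub_X_deg (F := K) ht1
      have b3 : (Polynomial.C (c ^ (p ^ r)) * Polynomial.X
          - Polynomial.C c * Polynomial.X ^ (p ^ r)).natDegree ≤ p ^ r := by
        refine (Polynomial.natDegree_sub_le _ _).trans ?_
        have e1 : (Polynomial.C (c ^ (p ^ r)) * Polynomial.X).natDegree ≤ 1 :=
          (Polynomial.natDegree_C_mul_le _ _).trans Polynomial.natDegree_X_le
        have e2 : (Polynomial.C c * Polynomial.X ^ (p ^ r)).natDegree ≤ p ^ r :=
          (Polynomial.natDegree_C_mul_le _ _).trans (Polynomial.natDegree_X_pow _).le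
        omega
      have hd : Q.natDegree ≤ 1 + p ^ r + p ^ r := by
        rw [hQdef]
        refine (Polynomial.natDegree_mul_le).trans ?_
        have h12 : (Polynomial.X * ((Polynomial.X : Polynomial K) ^ (p ^ r)
            - Polynomial.X)).natDegree ≤ 1 + p ^ r := by
          refine (Polynomial.natDegree_mul_le).trans ?_
          omega
        omega
      rw [hcard']
      nlinarith
    obtain ⟨x, hx⟩ := exists_eval_ne hQne hQdeg
    rw [hQdef] at hx
    simp only [Polynomial.eval_mul, Polynomial.eval_sub, Polynomial.eval_pow,
      Polynomial.eval_X, Polynomial.eval_C] at hx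
    refine ⟨x, ?_, ?_, ?_⟩
    · intro h; exact hx (by rw [h]; ring)
    · intro h; exact hx (by rw [h]; ring)
    · intro h; exact hx (by rw [h]; ring)
  choose lam hlam0 hlam1 hlam2 using hlamex
  -- the two pairs with product c have different D-values
  have hDneq : ∀ (c : K) (hc : c ≠ 0),
      1 * c ^ (p ^ r) + 1 ^ (p ^ r) * c ≠
        lam c hc * (c * (lam c hc)⁻¹) ^ (p ^ r) + (lam c hc) ^ (p ^ r) * (c * (lam c hc)⁻¹) := by
    intro c hc heq
    set l := lam c hc with hldef
    have hl0 := hlam0 c hc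
    have hl1' := hlam1 c hc
    have hl2' := hlam2 c hc
    rw [← hldef] at hl0 hl1' hl2'
    have hlt : l ^ (p ^ r) ≠ 0 := pow_ne_zero _ hl0
    simp only [one_pow, one_mul, mul_pow, inv_pow] at heq
    have heq' : (c ^ (p ^ r) + c) * (l ^ (p ^ r) * l)
        = (l * (c ^ (p ^ r) * (l ^ (p ^ r))⁻¹) + l ^ (p ^ r) * (c * l⁻¹))
          * (l ^ (p ^ r) * l) := by rw [heq]
    have hexp : (l * (c ^ (p ^ r) * (l ^ (p ^ r))⁻¹) + l ^ (p ^ r) * (c * l⁻¹))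
        * (l ^ (p ^ r) * l)
        = c ^ (p ^ r) * l ^ 2 + c * (l ^ (p ^ r)) ^ 2 := by
      have i1 : (l ^ (p ^ r))⁻¹ * l ^ (p ^ r) = 1 := inv_mul_cancel₀ hlt
      have i2 : l⁻¹ * l = 1 := inv_mul_cancel₀ hl0
      calc (l * (c ^ (p ^ r) * (l ^ (p ^ r))⁻¹) + l ^ (p ^ r) * (c * l⁻¹)) * (l ^ (p ^ r) * l)
          = c ^ (p ^ r) * l ^ 2 * ((l ^ (p ^ r))⁻¹ * l ^ (p ^ r))
            + c * (l ^ (p ^ r)) ^ 2 * (l⁻¹ * l) := by ring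
        _ = c ^ (p ^ r) * l ^ 2 + c * (l ^ (p ^ r)) ^ 2 := by rw [i1, i2, mul_one, mul_one]
    rw [hexp] at heq'
    have hE : (l ^ (p ^ r) - l) * (c ^ (p ^ r) * l - c * l ^ (p ^ r)) = 0 := by
      linear_combination heq'
    rcases mul_eq_zero.mp hE with h' | h'
    · exact hl1' h'
    · exact hl2' h'
  -- the injective map giving the counting contradiction
  classical
  let e1 : {c : K // c ≠ 0} × Bool → K := fun z => if z.2 then lam z.1.1 z.1.2 else 1
  let e2 : {c : K // c ≠ 0} × Bool → K := fun z =>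
    if z.2 then z.1.1 * (lam z.1.1 z.1.2)⁻¹ else z.1.1
  have hprodz : ∀ z : {c : K // c ≠ 0} × Bool, e1 z * e2 z = z.1.1 := by
    rintro ⟨⟨c, hc⟩, i⟩
    cases i
    · simp [e1, e2]
    · simp only [e1, e2, if_pos]
      rw [mul_comm c, ← mul_assoc, mul_inv_cancel₀ (hlam0 c hc), one_mul]
  let σ : {c : K // c ≠ 0} × Bool → K := fun z => L2 (e1 z) * L2 (e2 z)
  have hinj : Function.Injective σ := by
    rintro ⟨⟨c, hc⟩, i⟩ ⟨⟨c', hc'⟩, j⟩ h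
    obtain ⟨hP, hD⟩ := keyPD _ _ _ _ h
    rw [hprodz ⟨⟨c, hc⟩, i⟩, hprodz ⟨⟨c', hc'⟩, j⟩] at hP
    simp only at hP
    subst hP
    cases i <;> cases j
    · rfl
    · exfalso
      simp only [e1, e2, if_pos, if_neg, Bool.false_eq_true, ite_false, ite_true] at hD
      exact hDneq c hc hD
    · exfalso
      simp only [e1, e2, if_pos, if_neg, Bool.false_eq_true, ite_false, ite_true] at hD
      exact hDneq c hc' hD.symm
    · rfl
  have hle := Fintype.card_le_of_injective σ hinj
  rw [Fintype.card_prod, Fintype.card_bool] at hle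
  have hsub : Fintype.card {c : K // c ≠ 0} = Fintype.card K - 1 := by
    rw [← Nat.card_eq_fintype_card, ← Nat.card_congr (unitsEquivNeZero (G₀ := K)),
      Nat.card_units, Nat.card_eq_fintype_card]
  rw [hsub] at hle
  have h25 : 25 ≤ Fintype.card K := by
    rw [hcard']
    nlinarith
  omega

end Aux

theorem pow_pr_add_two_not_EAequiv_cube (p r : ℕ) [Fact p.Prime] (hp : 5 ≤ p) (hr : 0 < r) :
    ¬ EAEquiv (fun x : GaloisField p (2 * r) => x ^ (p ^ r + 2))
        (fun x : GaloisField p (2 * r) => x ^ 3) := by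
  haveI : Fintype (GaloisField p (2 * r)) := Fintype.ofFinite _
  have hcard : Fintype.card (GaloisField p (2 * r)) = p ^ (2 * r) := by
    rw [← Nat.card_eq_fintype_card, GaloisField.card]
    omega
  exact aux_main p r hp hr hcard
end

section
/- Let q = p^m with p ≥ 5 prime and let A : F_q → F_q be an Alltop function. For a, b ∈ F_q define the vector v_{ab} ∈ ℂ^{F_q} by v_{ab}(x) = (1/√q)·χ(A(x+a) + b(x+a)), where χ(x) = e^{2πi·tr(x)/p} and tr : F_q → F_p is the absolute trace. Then the standard basis E of ℂ^{F_q}, together with the q sets V_a = {v_{ab} : b ∈ F_q} for a ∈ F_q, form a complete set of q + 1 mutually unbiased bases of ℂ^q: each V_a is an orthonormal basis, and any two distinct bases among E, V_0, ..., V_{q-1} are unbiased. -/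
open Finset

/-- The additive character `χ(x) = e^{2πi·tr(x)/p}` of `F_{p^m}`, where `tr` is the
absolute trace to `F_p = ZMod p`. -/
noncomputable def chi (p m : ℕ) [Fact p.Prime] (x : GaloisField p m) : ℂ :=
  Complex.exp (2 * Real.pi * Complex.I *
    ((Algebra.trace (ZMod p) (GaloisField p m) x).val : ℂ) / (p : ℂ))

/-- The standard Hermitian inner product `⟨u, w⟩ = ∑ x, conj (u x) * w x` on `ℂ^F`. -/
noncomputable def herm {F : Type*} [Fintype F] (u w : F → ℂ) : ℂ :=
  ∑ x : F, (starRingEnd ℂ) (u x) * w x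

/-- The Alltop-type vector `v_{ab}(x) = q^{-1/2} χ(A(x+a) + b(x+a))` in `ℂ^{F_q}`,
`q = p^m`. -/
noncomputable def alltopVec (p m : ℕ) [Fact p.Prime]
    (A : GaloisField p m → GaloisField p m) (a b : GaloisField p m) :
    GaloisField p m → ℂ :=
  fun x => ((1 / Real.sqrt ((p : ℝ) ^ m) : ℝ) : ℂ) * chi p m (A (x + a) + b * (x + a))

open scoped Classical in
/-- The standard basis vector `e_y` of `ℂ^{F_q}`. -/
noncomputable def stdVec (p m : ℕ) [Fact p.Prime] (y : GaloisField p m) : GaloisField p m → ℂ :=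
  fun x => if x = y then 1 else 0

/-!
Since `χ` is an additive character, `⟨v_{ab}, v_{cd}⟩` is `1/q` times the character sum of
`y ↦ Δ_{A,c-a}(y) + (d-b)y + d(c-a)`. For `a = c` this is orthogonality of characters. For
`a ≠ c` the function is planar, because `A` is Alltop and adding an affine map preserves
planarity; and the character sum `S` of a planar `g` has `|S|² = ∑_t ∑_y χ(Δ_{g,t}(y))`, in
which every `t ≠ 0` contributes `0` and `t = 0` contributes `q`.
-/

lemma IsPlanar.add_affine {F : Type*} [Field F] {g : F → F} (hg : IsPlanar g) (s t : F) :
    IsPlanar (fun y => g y + s * y + t) := by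
  intro a ha
  have hΔ : deltaFn (fun y => g y + s * y + t) a = (· + s * a) ∘ deltaFn g a := by
    funext y
    simp only [deltaFn, Function.comp_apply]
    ring
  rw [hΔ]
  exact (Equiv.addRight (s * a)).bijective.comp (hg a ha)

namespace AddChar

lemma herm_ofReal_mul {ι G : Type*} [Fintype ι] [AddCommGroup G] [Finite G]
    (ψ : AddChar G ℂ) (r : ℝ) (f g : ι → G) :
    herm (fun x => (r : ℂ) * ψ (f x)) (fun x => (r : ℂ) * ψ (g x)) =
      ((r ^ 2 : ℝ) : ℂ) * ∑ x, ψ (g x - f x) := by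
  rw [herm, Finset.mul_sum]
  refine Finset.sum_congr rfl fun x _ => ?_
  rw [map_mul, Complex.conj_ofReal, ← map_neg_eq_conj, sub_eq_neg_add, map_add_eq_mul]
  push_cast
  ring

variable {F : Type*} [Field F] [Fintype F] {ψ : AddChar F ℂ}

lemma sum_comp_eq_zero_of_bijective (hψ : ψ ≠ 1) {g : F → F} (hg : g.Bijective) :
    ∑ x, ψ (g x) = 0 := by
  rw [Fintype.sum_bijective g hg _ ψ fun _ => rfl, sum_eq_zero_of_ne_one hψ]

lemma sum_deltaFn_of_isPlanar [DecidableEq F] (hψ : ψ ≠ 1) {g : F → F} (hg : IsPlanar g)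
    (t : F) : ∑ y, ψ (deltaFn g t y) = if t = 0 then (Fintype.card F : ℂ) else 0 := by
  split_ifs with ht
  · simp [ht, deltaFn]
  · exact sum_comp_eq_zero_of_bijective hψ (hg t ht)

lemma norm_sum_comp_of_isPlanar (hψ : ψ ≠ 1) {g : F → F} (hg : IsPlanar g) :
    ‖∑ x, ψ (g x)‖ = √(Fintype.card F) := by
  classical
  set S := ∑ x, ψ (g x)
  have hS : (starRingEnd ℂ) S * S = Fintype.card F :=
    calc (starRingEnd ℂ) S * S = ∑ y, ∑ x, ψ (g x - g y) := by
          simp only [S, map_sum, Finset.sum_mul_sum, ← map_neg_eq_conj, ← map_add_eq_mul,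
            neg_add_eq_sub]
      _ = ∑ y, ∑ t, ψ (deltaFn g t y) := by
          refine Finset.sum_congr rfl fun y _ => ?_
          rw [← Equiv.sum_comp (Equiv.addLeft y)]
          simp [deltaFn]
      _ = Fintype.card F := by
          rw [Finset.sum_comm]
          simp [sum_deltaFn_of_isPlanar hψ hg]
  have hnormSq : ‖S‖ ^ 2 = Fintype.card F := by
    rw [Complex.sq_norm, ← Complex.ofReal_inj, Complex.normSq_eq_conj_mul_self, hS]
    simp
  rw [← hnormSq, Real.sqrt_sq (norm_nonneg S)]

end AddChar

section GaloisField

variable (p m : ℕ) [Fact p.Prime]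

noncomputable def chiAddChar : AddChar (GaloisField p m) ℂ :=
  ZMod.stdAddChar.compAddMonoidHom (Algebra.trace (ZMod p) (GaloisField p m)).toAddMonoidHom

lemma coe_chiAddChar : ⇑(chiAddChar p m) = chi p m := by
  funext x
  simp [chiAddChar, chi, ZMod.stdAddChar_apply, ZMod.toCircle_apply]

lemma chiAddChar_ne_one : chiAddChar p m ≠ 1 := by
  intro h
  obtain ⟨x, hx⟩ := DFunLike.ne_iff.mp (Algebra.trace_ne_zero (ZMod p) (GaloisField p m))
  have hχx := DFunLike.congr_fun h x
  rw [AddChar.one_apply, ← (ZMod.stdAddChar (N := p)).map_zero_eq_one] at hχx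
  exact hx (ZMod.injective_stdAddChar hχx)

lemma card_galoisField [Fintype (GaloisField p m)] (hm : m ≠ 0) :
    Fintype.card (GaloisField p m) = p ^ m := by
  rw [← Nat.card_eq_fintype_card, GaloisField.card p m hm]

variable {p m}

lemma herm_stdVec [Fintype (GaloisField p m)] (y : GaloisField p m)
    (v : GaloisField p m → ℂ) : herm (stdVec p m y) v = v y := by
  rw [herm, Fintype.sum_eq_single y fun x hx => by simp [stdVec, hx]]
  simp [stdVec]

variable (A : GaloisField p m → GaloisField p m)

lemma alltopVec_eq_chiAddChar (a b : GaloisField p m) :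
    alltopVec p m A a b = fun x =>
      ((1 / √((p : ℝ) ^ m) : ℝ) : ℂ) * chiAddChar p m (A (x + a) + b * (x + a)) := by
  rw [coe_chiAddChar]
  rfl

lemma norm_alltopVec_apply (a b x : GaloisField p m) :
    ‖alltopVec p m A a b x‖ = 1 / √((p : ℝ) ^ m) := by
  rw [alltopVec_eq_chiAddChar, norm_mul, AddChar.norm_apply, mul_one, Complex.norm_real,
    Real.norm_of_nonneg (by positivity)]

variable [Fintype (GaloisField p m)]

lemma herm_alltopVec (a b c d : GaloisField p m) :
    herm (alltopVec p m A a b) (alltopVec p m A c d) = ((1 / (p : ℝ) ^ m : ℝ) : ℂ) *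
      ∑ y, chi p m (deltaFn A (c - a) y + (d - b) * y + d * (c - a)) := by
  have hr : (1 / √((p : ℝ) ^ m)) ^ 2 = 1 / (p : ℝ) ^ m := by
    rw [div_pow, Real.sq_sqrt (by positivity), one_pow]
  rw [alltopVec_eq_chiAddChar, alltopVec_eq_chiAddChar, AddChar.herm_ofReal_mul, hr,
    coe_chiAddChar]
  conv_rhs => rw [← Equiv.sum_comp (Equiv.addRight a)]
  refine congrArg _ (Finset.sum_congr rfl fun x _ => congrArg _ ?_)
  simp only [Equiv.coe_addRight, deltaFn]
  rw [show x + a + (c - a) = x + c by ring]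
  ring

open scoped Classical in
lemma herm_alltopVec_self (hm : m ≠ 0) (a b d : GaloisField p m) :
    herm (alltopVec p m A a b) (alltopVec p m A a d) = if b = d then 1 else 0 := by
  have hprim := AddChar.IsPrimitive.of_ne_one (chiAddChar_ne_one p m)
  simp only [herm_alltopVec, sub_self, deltaFn, add_zero, zero_add, mul_zero, ← coe_chiAddChar,
    mul_comm (d - b)]
  rw [AddChar.sum_mulShift _ hprim, sub_eq_zero, @eq_comm _ d b]
  split_ifs
  · rw [card_galoisField p m hm]
    push_cast
    exact one_div_mul_cancel (pow_ne_zero m (Nat.cast_ne_zero.mpr (Fact.out : p.Prime).ne_zero))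
  · simp

lemma norm_herm_alltopVec_of_ne (hm : m ≠ 0) (hA : IsAlltop A) {a c : GaloisField p m}
    (hac : a ≠ c) (b d : GaloisField p m) :
    ‖herm (alltopVec p m A a b) (alltopVec p m A c d)‖ = 1 / √((p : ℝ) ^ m) := by
  have hplanar : IsPlanar fun y => deltaFn A (c - a) y + (d - b) * y + d * (c - a) :=
    (hA (c - a) (sub_ne_zero.mpr hac.symm)).add_affine (d - b) (d * (c - a))
  rw [herm_alltopVec, norm_mul, ← coe_chiAddChar,
    AddChar.norm_sum_comp_of_isPlanar (chiAddChar_ne_one p m) hplanar, card_galoisField p m hm,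
    Complex.norm_real, Real.norm_of_nonneg (by positivity), one_div_mul_eq_div, Nat.cast_pow,
    Real.sqrt_div_self']

end GaloisField

open scoped Classical in
theorem alltop_complete_MUBs_general (p m : ℕ) [Fact p.Prime] [Fintype (GaloisField p m)]
    (hm : 0 < m) (A : GaloisField p m → GaloisField p m) (hA : IsAlltop A) :
    -- each V_a is an orthonormal basis (q orthonormal vectors in ℂ^q)
    (∀ a b d : GaloisField p m,
      herm (alltopVec p m A a b) (alltopVec p m A a d) = if b = d then 1 else 0) ∧
    -- the standard basis E is orthonormal
    (∀ y z : GaloisField p m, herm (stdVec p m y) (stdVec p m z) = if y = z then 1 else 0) ∧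
    -- distinct bases V_a and V_c are unbiased
    (∀ a c : GaloisField p m, a ≠ c → ∀ b d : GaloisField p m,
      ‖herm (alltopVec p m A a b) (alltopVec p m A c d)‖ =
        1 / Real.sqrt ((p : ℝ) ^ m)) ∧
    -- each V_a is unbiased with the standard basis E
    (∀ y a b : GaloisField p m,
      ‖herm (stdVec p m y) (alltopVec p m A a b)‖ =
        1 / Real.sqrt ((p : ℝ) ^ m)) :=
  ⟨herm_alltopVec_self A hm.ne', fun y z => herm_stdVec y (stdVec p m z),
    fun _ _ hac => norm_herm_alltopVec_of_ne A hm.ne' hA hac,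
    fun y a b => by rw [herm_stdVec]; exact norm_alltopVec_apply A a b y⟩

open scoped Classical in
theorem alltop_complete_MUBs (p m : ℕ) [Fact p.Prime] [Fintype (GaloisField p m)]
    (hp : 5 ≤ p) (hm : 0 < m) (A : GaloisField p m → GaloisField p m) (hA : IsAlltop A) :
    -- each V_a is an orthonormal basis (q orthonormal vectors in ℂ^q)
    (∀ a b d : GaloisField p m,
      herm (alltopVec p m A a b) (alltopVec p m A a d) = if b = d then 1 else 0) ∧
    -- the standard basis E is orthonormal
    (∀ y z : GaloisField p m, herm (stdVec p m y) (stdVec p m z) = if y = z then 1 else 0) ∧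
    -- distinct bases V_a and V_c are unbiased
    (∀ a c : GaloisField p m, a ≠ c → ∀ b d : GaloisField p m,
      ‖herm (alltopVec p m A a b) (alltopVec p m A c d)‖ =
        1 / Real.sqrt ((p : ℝ) ^ m)) ∧
    -- each V_a is unbiased with the standard basis E
    (∀ y a b : GaloisField p m,
      ‖herm (stdVec p m y) (alltopVec p m A a b)‖ =
        1 / Real.sqrt ((p : ℝ) ^ m)) :=
  alltop_complete_MUBs_general p m hm A hA
end

section
/- Let K ≥ 2 and suppose B_0, ..., B_K are K + 1 mutually unbiased orthonormal bases of ℂ^K (a complete set of MUBs). Regard their union C as a signal set of N = K^2 + K unit vectors. Then the maximum correlation amplitude I_max(C) = max over distinct u, v ∈ C of |⟨u, v⟩| equals 1/√K, which equals the Levenstein bound value √((2N − K^2 − K)/((K+1)(N − K))) for N = K^2 + K; that is, C meets the maximum Levenstein bound. -/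
/-!
Within one basis distinct vectors are orthogonal and across two bases every correlation is
`1/√K`, so all correlations of the union are at most `1/√K`; the value is attained by vectors
from two different bases, which are distinct because their inner product is not `1`.
At `N = K² + K` the Levenstein expression collapses to `K(K+1) / ((K+1)K²) = 1/K`.
-/

open scoped InnerProductSpace

noncomputable def levensteinBound (N K : ℝ) : ℝ :=
  √((2 * N - K ^ 2 - K) / ((K + 1) * (N - K)))

theorem levensteinBound_sq_add_self {K : ℝ} (hK : 0 < K) :
    levensteinBound (K ^ 2 + K) K = 1 / √K := by
  have hratio : (2 * (K ^ 2 + K) - K ^ 2 - K) / ((K + 1) * (K ^ 2 + K - K)) = K⁻¹ := by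
    rw [show 2 * (K ^ 2 + K) - K ^ 2 - K = (K + 1) * K by ring,
      show K ^ 2 + K - K = K * K by ring]
    field_simp
  rw [levensteinBound, hratio, Real.sqrt_inv, one_div]

section Unbiased

variable {𝕜 E ι κ : Type*} [RCLike 𝕜] [NormedAddCommGroup E] [InnerProductSpace 𝕜 E]
  {B : ι → κ → E} {c : ℝ}

theorem norm_inner_le_of_orthonormal_of_unbiased (horth : ∀ i, Orthonormal 𝕜 (B i))
    (hc : 0 ≤ c) (hunbiased : ∀ i j, i ≠ j → ∀ s t, ‖⟪B i s, B j t⟫_𝕜‖ = c)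
    {i j : ι} {s t : κ} (hne : B i s ≠ B j t) : ‖⟪B i s, B j t⟫_𝕜‖ ≤ c := by
  by_cases hij : i = j
  · subst hij
    have hst : s ≠ t := fun h => hne (h ▸ rfl)
    simpa [(horth i).inner_eq_zero hst] using hc
  · exact (hunbiased i j hij s t).le

theorem ne_of_unbiased (horth : ∀ i, Orthonormal 𝕜 (B i)) (hc : c ≠ 1)
    (hunbiased : ∀ i j, i ≠ j → ∀ s t, ‖⟪B i s, B j t⟫_𝕜‖ = c)
    {i j : ι} (hij : i ≠ j) (s t : κ) : B i s ≠ B j t := by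
  intro heq
  have hself : ‖⟪B j t, B j t⟫_𝕜‖ = 1 := by
    rw [inner_self_eq_norm_sq_to_K, (horth j).1 t]
    simp
  have hij_corr := hunbiased i j hij s t
  rw [heq, hself] at hij_corr
  exact hc hij_corr.symm

theorem isGreatest_correlations_of_unbiased [Nontrivial ι] [Nonempty κ]
    (horth : ∀ i, Orthonormal 𝕜 (B i)) (hc₀ : 0 ≤ c) (hc₁ : c ≠ 1)
    (hunbiased : ∀ i j, i ≠ j → ∀ s t, ‖⟪B i s, B j t⟫_𝕜‖ = c) :
    IsGreatest {x : ℝ | ∃ u v : E, (∃ i s, u = B i s) ∧ (∃ j t, v = B j t) ∧ u ≠ v ∧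
      x = ‖⟪u, v⟫_𝕜‖} c := by
  obtain ⟨i, j, hij⟩ := exists_pair_ne ι
  obtain ⟨s⟩ := ‹Nonempty κ›
  refine ⟨⟨B i s, B j s, ⟨i, s, rfl⟩, ⟨j, s, rfl⟩, ne_of_unbiased horth hc₁ hunbiased hij s s,
    (hunbiased i j hij s s).symm⟩, ?_⟩
  rintro x ⟨u, v, ⟨i, s, rfl⟩, ⟨j, t, rfl⟩, hne, rfl⟩
  exact norm_inner_le_of_orthonormal_of_unbiased horth hc₀ hunbiased hne

end Unbiased

/-- A complete set of `K + 1` mutually unbiased bases of `ℂ^K`, viewed as an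
`(N, K)` signal set with `N = K^2 + K`, meets the maximum Levenstein bound:
its maximum correlation amplitude is `1/√K`, which is exactly the Levenstein
bound value `√((2N − K² − K)/((K+1)(N − K)))` for `N = K² + K`. -/
theorem mubs_meet_levenstein_bound (K : ℕ) (hK : 2 ≤ K)
    (B : Fin (K + 1) → Fin K → EuclideanSpace ℂ (Fin K))
    (horth : ∀ i, Orthonormal ℂ (B i))
    (hunbiased : ∀ i j, i ≠ j → ∀ s t,
      ‖(inner ℂ (B i s) (B j t) : ℂ)‖ = 1 / Real.sqrt K) :
    IsGreatest {x : ℝ | ∃ u v : EuclideanSpace ℂ (Fin K),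
        (∃ i s, u = B i s) ∧ (∃ j t, v = B j t) ∧ u ≠ v ∧ x = ‖(inner ℂ u v : ℂ)‖}
      (1 / Real.sqrt K) ∧
    (1 / Real.sqrt K : ℝ) =
      Real.sqrt ((2 * ((K : ℝ) ^ 2 + K) - (K : ℝ) ^ 2 - K) /
        (((K : ℝ) + 1) * (((K : ℝ) ^ 2 + K) - K))) := by
  have : Nontrivial (Fin (K + 1)) := Fin.nontrivial_iff_two_le.mpr (by omega)
  have : NeZero K := ⟨by omega⟩
  have hc₁ : 1 / √(K : ℝ) ≠ 1 := by
    rw [Ne, div_eq_one_iff_eq (by positivity), eq_comm, Real.sqrt_eq_one]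
    exact_mod_cast (by omega : K ≠ 1)
  exact ⟨isGreatest_correlations_of_unbiased horth (by positivity) hc₁ hunbiased,
    (levensteinBound_sq_add_self (by positivity)).symm⟩
end
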